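/- For all real numbers R, ρ, λ with 1 ≤ ρ ≤ R and −1 < λ ≤ 1, one has (R² − λ) log(R/ρ) + λ(R² − ρ²)/ρ² ≥ 0. -/

import Mathlib

open MeasureTheory Filter Set Topology
open scoped ENNReal

noncomputable section

/-- The round annulus `A(r,R) = {z : r < |z| < R}`. -/
def ann (r R : ℝ) : Set ℂ := {z : ℂ | r < norm z ∧ norm z < R}

/-- The Laplacian of `h : ℂ → ℂ`, viewed as a function of two real variables. -/
def lap (h : ℂ → ℂ) (z : ℂ) : ℂ :=
  fderiv ℝ (fun w => fderiv ℝ h w 1) z 1 +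
    fderiv ℝ (fun w => fderiv ℝ h w Complex.I) z Complex.I

/-- A complex-valued harmonic function on a set (real and imaginary parts harmonic). -/
def HarmOn (h : ℂ → ℂ) (s : Set ℂ) : Prop :=
  ContDiffOn ℝ 2 h s ∧ ∀ z ∈ s, lap h z = 0

/-- Cauchy–Riemann derivative `h_z`. -/
def dz (h : ℂ → ℂ) (z : ℂ) : ℂ :=
  (fderiv ℝ h z 1 - Complex.I * fderiv ℝ h z Complex.I) / 2

/-- Cauchy–Riemann derivative `h_z̄`. -/
def dzbar (h : ℂ → ℂ) (z : ℂ) : ℂ :=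
  (fderiv ℝ h z 1 + Complex.I * fderiv ℝ h z Complex.I) / 2

/-- Jacobian determinant `J(z,h) = |h_z|² − |h_z̄|²`. -/
def jac (h : ℂ → ℂ) (z : ℂ) : ℝ := norm (dz h z) ^ 2 - norm (dzbar h z) ^ 2

/-- Squared Hilbert–Schmidt norm `‖Dh‖² = 2(|h_z|² + |h_z̄|²) = |h_x|² + |h_y|²`. -/
def Dn2 (h : ℂ → ℂ) (z : ℂ) : ℝ :=
  norm (fderiv ℝ h z 1) ^ 2 + norm (fderiv ℝ h z Complex.I) ^ 2

/-- Cluster set of `h` at the inner circle of the annulus `A(r,R)`. -/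
def clusterInner (h : ℂ → ℂ) (r R : ℝ) : Set ℂ :=
  ⋂ ρ ∈ Set.Ioo r R, closure (h '' ann r ρ)

/-- `h` is an orientation-preserving harmonic homeomorphism of `A(r,R)` onto `T`
whose cluster set at the inner circle of `A(r,R)` is `ibdry` (the inner boundary of `T`). -/
def IsHarmHomeo (h : ℂ → ℂ) (r R : ℝ) (T : Set ℂ) (ibdry : Set ℂ) : Prop :=
  HarmOn h (ann r R) ∧ (∀ z ∈ ann r R, 0 < jac h z) ∧
    Set.BijOn h (ann r R) T ∧ clusterInner h r R = ibdry

/-- Circular mean `⨍_{C_ρ} f`. -/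
def cAvg (f : ℂ → ℂ) (ρ : ℝ) : ℂ :=
  (2 * Real.pi)⁻¹ • ∫ θ in (0:ℝ)..(2 * Real.pi), f ((ρ : ℂ) * Complex.exp ((θ : ℂ) * Complex.I))

/-- Quadratic mean `U(ρ) = ⨍_{C_ρ} |h|²`. -/
def qMean (h : ℂ → ℂ) (ρ : ℝ) : ℝ :=
  (2 * Real.pi)⁻¹ * ∫ θ in (0:ℝ)..(2 * Real.pi),
    norm (h ((ρ : ℂ) * Complex.exp ((θ : ℂ) * Complex.I))) ^ 2

/-- Variance `V(ρ) = ⨍_{C_ρ}|h|² − |⨍_{C_ρ} h|²`. -/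
def vVar (h : ℂ → ℂ) (ρ : ℝ) : ℝ := qMean h ρ - norm (cAvg h ρ) ^ 2

/-- Circular mean of the radial (normal) derivative, `⨍_{C_ρ} ∂h/∂ρ`. -/
def rAvg (h : ℂ → ℂ) (ρ : ℝ) : ℂ :=
  (2 * Real.pi)⁻¹ • ∫ θ in (0:ℝ)..(2 * Real.pi),
    fderiv ℝ h ((ρ : ℂ) * Complex.exp ((θ : ℂ) * Complex.I)) (Complex.exp ((θ : ℂ) * Complex.I))

/-- Mean outer radius `R_*(h) = lim_{ρ↗R} (⨍_{C_ρ}|h|²)^{1/2}`, as a value in `[0,∞]`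
(the limit exists since the quadratic means are increasing; we use the `limsup`). -/
def Rstar (h : ℂ → ℂ) (R : ℝ) : ℝ≥0∞ :=
  Filter.limsup (fun ρ => ENNReal.ofReal (Real.sqrt (qMean h ρ))) (𝓝[<] R)

/-- The ordinary differential operator `L^λ`. -/
def Lop (l : ℝ) (F : ℝ → ℝ) (ρ : ℝ) : ℝ :=
  deriv (deriv F) ρ + ((3 * l - ρ ^ 2) / (ρ * (ρ ^ 2 + l))) * deriv F ρ
    - (8 * l / (ρ ^ 2 + l) ^ 2) * F ρ

/-- The extremal mapping `h^λ(z) = (1/(1+λ))(z + λ/z̄)`. -/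
def hext (l : ℝ) (z : ℂ) : ℂ := (1 / (1 + (l : ℂ))) * (z + (l : ℂ) / (starRingEnd ℂ z))

/-- `A` is a doubly connected domain whose inner boundary is the unit circle:
its complement is the disjoint union of the closed unit disk and an unbounded
closed connected set. -/
def DCUnit (A : Set ℂ) : Prop :=
  IsOpen A ∧ IsConnected A ∧
    ∃ G : Set ℂ, IsClosed G ∧ IsConnected G ∧ ¬ Bornology.IsBounded G ∧
      Disjoint (Metric.closedBall (0 : ℂ) 1) G ∧ Aᶜ = Metric.closedBall (0 : ℂ) 1 ∪ G

/-- Circular mean `⨍_{C_ρ} Im(h̄ · h_θ)` where `h_θ` is the angular derivative. -/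
def angMean (h : ℂ → ℂ) (ρ : ℝ) : ℝ :=
  (2 * Real.pi)⁻¹ * ∫ θ in (0:ℝ)..(2 * Real.pi),
    (starRingEnd ℂ (h ((ρ : ℂ) * Complex.exp ((θ : ℂ) * Complex.I))) *
      fderiv ℝ h ((ρ : ℂ) * Complex.exp ((θ : ℂ) * Complex.I))
        (Complex.I * ((ρ : ℂ) * Complex.exp ((θ : ℂ) * Complex.I)))).im

theorem sq_sub_one_le_mul_log {x : ℝ} (hx : 1 ≤ x) : x ^ 2 - 1 ≤ (x ^ 2 + 1) * Real.log x := by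
  have h := Real.le_log_one_add_of_nonneg (sub_nonneg.2 (one_le_pow₀ hx : 1 ≤ x ^ 2))
  rw [add_sub_cancel, Real.log_pow, div_le_iff₀ (by nlinarith)] at h
  push_cast at h
  linarith

/-- The left side is affine in `l`, so it suffices to check the endpoints `l = ±1`. -/
theorem mul_log_add_mul_sq_sub_one_nonneg {R x l : ℝ} (hx : 1 ≤ x) (hxR : x ≤ R)
    (hl : -1 ≤ l) (hl' : l ≤ 1) : 0 ≤ (R ^ 2 - l) * Real.log x + l * (x ^ 2 - 1) := by
  have hlog : 0 ≤ Real.log x := Real.log_nonneg hx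
  have hsq : x ^ 2 ≤ R ^ 2 := pow_le_pow_left₀ (by linarith) hxR 2
  have at_one : 0 ≤ (R ^ 2 - 1) * Real.log x + (x ^ 2 - 1) := by
    have : 1 ≤ x ^ 2 := one_le_pow₀ hx
    exact add_nonneg (mul_nonneg (by linarith) hlog) (by linarith)
  have at_neg_one : 0 ≤ (R ^ 2 + 1) * Real.log x - (x ^ 2 - 1) := by
    linarith [sq_sub_one_le_mul_log hx, mul_nonneg (sub_nonneg.2 hsq) hlog]
  linarith [mul_nonneg (sub_nonneg.2 hl') at_neg_one, mul_nonneg (neg_le_iff_add_nonneg.1 hl) at_one]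

/-- elementary inequality (8.15). -/
theorem stmt18 (R ρ l : ℝ) (h1 : 1 ≤ ρ) (h2 : ρ ≤ R) (h3 : -1 < l) (h4 : l ≤ 1) :
    0 ≤ (R ^ 2 - l) * Real.log (R / ρ) + l * (R ^ 2 - ρ ^ 2) / ρ ^ 2 := by
  have hρ : 0 < ρ := by linarith
  have hx : 1 ≤ R / ρ := (one_le_div hρ).2 h2
  have hxR : R / ρ ≤ R := div_le_self (by linarith) h1
  have hrescale : l * (R ^ 2 - ρ ^ 2) / ρ ^ 2 = l * ((R / ρ) ^ 2 - 1) := by field_simp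
  rw [hrescale]
  exact mul_log_add_mul_sq_sub_one_nonneg hx hxR h3.le h4

end
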